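/- For the pullback E of Lemma (pullback over X), suppose (U_n) is an increasing sequence of open subsets of X with union U. Then E(U) equals the closure of ⋃_n E(U_n). -/

import Mathlib

/-- A C*-algebra over a topological space `X`. -/
structure CStarOver (X : Type*) [TopologicalSpace X] (A : Type*)
    [NonUnitalNormedRing A] [StarRing A] [CStarRing A] [NormedSpace ℂ A]
    [CompleteSpace A] [IsScalarTower ℂ A A] [SMulCommClass ℂ A A] : Type _ where
  J : Set X → Submodule ℂ A
  mul_mem_left : ∀ U, IsOpen U → ∀ a b : A, b ∈ J U → a * b ∈ J U
  mul_mem_right : ∀ U, IsOpen U → ∀ a b : A, b ∈ J U → b * a ∈ J U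
  isClosed : ∀ U, IsOpen U → IsClosed (J U : Set A)
  mono : ∀ U V, IsOpen U → IsOpen V → U ⊆ V → J U ≤ J V
  map_empty : J ∅ = ⊥
  map_univ : J Set.univ = ⊤
  map_inter : ∀ U V, IsOpen U → IsOpen V → J (U ∩ V) = J U ⊓ J V
  map_iUnion : ∀ U : ℕ → Set X, (∀ n, IsOpen (U n)) → Monotone U →
    (J (⋃ n, U n) : Set A) = closure ↑(⨆ n, J (U n))

variable {X : Type*} [TopologicalSpace X]
  {I : Type*} [NonUnitalNormedRing I] [StarRing I] [CStarRing I] [NormedSpace ℂ I]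
  [CompleteSpace I] [IsScalarTower ℂ I I] [SMulCommClass ℂ I I]
  {B : Type*} [NonUnitalNormedRing B] [StarRing B] [CStarRing B] [NormedSpace ℂ B]
  [CompleteSpace B] [IsScalarTower ℂ B B] [SMulCommClass ℂ B B]
  {C : Type*} [NonUnitalNormedRing C] [StarRing C] [CStarRing C] [NormedSpace ℂ C]
  [CompleteSpace C] [IsScalarTower ℂ C C] [SMulCommClass ℂ C C]
  {A : Type*} [NonUnitalNormedRing A] [StarRing A] [CStarRing A] [NormedSpace ℂ A]
  [CompleteSpace A] [IsScalarTower ℂ A A] [SMulCommClass ℂ A A]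

/-- The distinguished ideals `E(U) = E ∩ (A(U) ⊕ B(U))` of the pullback
`E = {(a,b) : φ(a) = p(b)}`. -/
def pullbackIdeal (CA : CStarOver X A) (CB : CStarOver X B)
    (φ : A →⋆ₙₐ[ℂ] C) (p : B →⋆ₙₐ[ℂ] C) (U : Set X) : Set (A × B) :=
  {x : A × B | φ x.1 = p x.2 ∧ x.1 ∈ CA.J U ∧ x.2 ∈ CB.J U}

/-! Let `(a, b) ∈ E(U)`. Approximate `a` by `a' ∈ A(Uₙ)` and lift `φ a'` to `b₁ ∈ B(Uₙ)`. By the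
open mapping theorem for `p : B(U) ↠ C(U)`, the small defect `p b - φ a' = φ (a - a')` lifts to a
small `b₂ ∈ B(U)`. The rest `b - b₁ - b₂` lies in `B(U) ∩ ker p = ι(I(U))`, hence is close to some
`ι z` with `z ∈ I(Uₖ)`, and `(a', b₁ + ι z) ∈ E(U_{max n k})` is close to `(a, b)`. The estimates
rest on `*`-homomorphisms between C*-algebras being contractive. -/

open Filter

/- The algebras carry no `StarModule ℂ` instance, so neither `NonUnitalCStarAlgebra` nor Mathlib's
contractivity of `*`-homomorphisms is available; the spectral-radius argument is redone in the plain
unitization, with `(fun x ↦ x * x)^[n] t` in place of `t ^ 2 ^ n`. -/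

theorem IsSelfAdjoint.iterate_mul_self {R : Type*} [NonUnitalNormedRing R] [StarRing R]
    [CStarRing R] {t : R} (ht : IsSelfAdjoint t) (n : ℕ) :
    IsSelfAdjoint ((fun x ↦ x * x)^[n] t) ∧ ‖(fun x ↦ x * x)^[n] t‖₊ = ‖t‖₊ ^ 2 ^ n := by
  induction n with
  | zero => simpa using ht
  | succ k ih =>
    obtain ⟨hsa, hnorm⟩ := ih
    rw [Function.iterate_succ_apply', hsa.nnnorm_mul_self, hnorm, ← pow_mul, ← pow_succ]
    simpa only [hsa.star_eq, and_true] using IsSelfAdjoint.star_mul_self ((fun x ↦ x * x)^[k] t)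

theorem Unitization.inr_iterate_mul_self {𝕜 R : Type*} [CommRing 𝕜] [NonUnitalRing R]
    [Module 𝕜 R] [IsScalarTower 𝕜 R R] [SMulCommClass 𝕜 R R] (t : R) (n : ℕ) :
    (((fun x ↦ x * x)^[n] t : R) : Unitization 𝕜 R) = (t : Unitization 𝕜 R) ^ 2 ^ n := by
  induction n with
  | zero => simp
  | succ k ih => rw [Function.iterate_succ_apply', Unitization.inr_mul, ih, pow_succ, pow_mul, sq]

theorem IsSelfAdjoint.spectralRadius_inr_eq_nnnorm {t : A} (ht : IsSelfAdjoint t) :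
    spectralRadius ℂ (t : Unitization ℂ A) = ‖t‖₊ := by
  refine tendsto_nhds_unique (l := (atTop : Filter ℕ)) ?_ tendsto_const_nhds
  convert (spectrum.pow_nnnorm_pow_one_div_tendsto_nhds_spectralRadius
      (t : Unitization ℂ A)).comp (tendsto_pow_atTop_atTop_of_one_lt one_lt_two) using 1
  funext n
  rw [Function.comp_apply, ← Unitization.inr_iterate_mul_self, Unitization.nnnorm_inr,
    (ht.iterate_mul_self n).2, ENNReal.coe_pow, ← ENNReal.rpow_natCast, ← ENNReal.rpow_mul]
  simp

namespace NonUnitalStarAlgHom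

theorem norm_apply_le_of_cstarRing (φ : A →⋆ₙₐ[ℂ] B) (a : A) : ‖φ a‖ ≤ ‖a‖ := by
  have hsa : ∀ t : A, IsSelfAdjoint t → ‖φ t‖₊ ≤ ‖t‖₊ := by
    intro t ht
    let ψ : Unitization ℂ A →ₐ[ℂ] Unitization ℂ B :=
      Unitization.lift ((Unitization.inrNonUnitalAlgHom ℂ B).comp (φ : A →ₙₐ[ℂ] B))
    have hψ : ψ t = (φ t : Unitization ℂ B) := by simp [ψ]; rfl
    have : spectralRadius ℂ (ψ t) ≤ spectralRadius ℂ (t : Unitization ℂ A) :=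
      iSup_le_iSup_of_subset (AlgHom.spectrum_apply_subset ψ _)
    rwa [hψ, (ht.map φ).spectralRadius_inr_eq_nnnorm, ht.spectralRadius_inr_eq_nnnorm,
      ENNReal.coe_le_coe] at this
  rw [← coe_nnnorm, ← coe_nnnorm, NNReal.coe_le_coe]
  refine nonneg_le_nonneg_of_sq_le_sq zero_le ?_
  simp_rw [← CStarRing.nnnorm_star_mul_self, ← map_star, ← map_mul]
  exact hsa _ (.star_mul_self a)

theorem dist_apply_le_of_cstarRing (φ : A →⋆ₙₐ[ℂ] B) (a a' : A) :
    dist (φ a) (φ a') ≤ dist a a' := by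
  simpa only [dist_eq_norm, map_sub] using φ.norm_apply_le_of_cstarRing (a - a')

theorem continuous_of_cstarRing (φ : A →⋆ₙₐ[ℂ] B) : Continuous φ :=
  AddMonoidHomClass.continuous_of_bound φ 1 fun a ↦ by
    simpa only [one_mul] using φ.norm_apply_le_of_cstarRing a

end NonUnitalStarAlgHom

theorem ContinuousLinearMap.exists_preimage_mem_norm_le {𝕜 E F : Type*}
    [NontriviallyNormedField 𝕜]
    [NormedAddCommGroup E] [NormedSpace 𝕜 E] [CompleteSpace E]
    [NormedAddCommGroup F] [NormedSpace 𝕜 F] [CompleteSpace F]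
    (f : E →L[𝕜] F) {S : Submodule 𝕜 E} {T : Submodule 𝕜 F}
    (hS : IsClosed (S : Set E)) (hT : IsClosed (T : Set F)) (hST : f '' S = T) :
    ∃ K > 0, ∀ y ∈ T, ∃ x ∈ S, f x = y ∧ ‖x‖ ≤ K * ‖y‖ := by
  have : CompleteSpace S := hS.completeSpace_coe
  have : CompleteSpace T := hT.completeSpace_coe
  let g : S →L[𝕜] T := (f.comp S.subtypeL).codRestrict T fun x ↦ by
    rw [← SetLike.mem_coe, ← hST]; exact ⟨x, x.2, rfl⟩
  have hg : Function.Surjective g := by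
    rintro ⟨y, hy⟩
    rw [← SetLike.mem_coe, ← hST] at hy
    obtain ⟨x, hx, rfl⟩ := hy
    exact ⟨⟨x, hx⟩, rfl⟩
  obtain ⟨K, hK, hlift⟩ := g.exists_preimage_norm_le hg
  refine ⟨K, hK, fun y hy ↦ ?_⟩
  obtain ⟨x, hx, hxnorm⟩ := hlift ⟨y, hy⟩
  exact ⟨x, x.2, congrArg Subtype.val hx, hxnorm⟩

namespace CStarOver

variable {E : Type*} [NonUnitalNormedRing E] [StarRing E] [CStarRing E] [NormedSpace ℂ E]
  [CompleteSpace E] [IsScalarTower ℂ E E] [SMulCommClass ℂ E E]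

theorem monotone_J_comp (CE : CStarOver X E) {Un : ℕ → Set X} (hUn : ∀ n, IsOpen (Un n))
    (hmono : Monotone Un) : Monotone (fun n ↦ CE.J (Un n)) :=
  fun _ _ hij ↦ CE.mono _ _ (hUn _) (hUn _) (hmono hij)

theorem J_le_J_iUnion (CE : CStarOver X E) {Un : ℕ → Set X} (hUn : ∀ n, IsOpen (Un n)) (n : ℕ) :
    CE.J (Un n) ≤ CE.J (⋃ n, Un n) :=
  CE.mono _ _ (hUn n) (isOpen_iUnion hUn) (Set.subset_iUnion Un n)

theorem exists_mem_dist_lt (CE : CStarOver X E) {Un : ℕ → Set X} (hUn : ∀ n, IsOpen (Un n))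
    (hmono : Monotone Un) {x : E} (hx : x ∈ CE.J (⋃ n, Un n)) {ε : ℝ} (hε : 0 < ε) :
    ∃ n, ∃ y ∈ CE.J (Un n), dist x y < ε := by
  rw [← SetLike.mem_coe, CE.map_iUnion Un hUn hmono, Metric.mem_closure_iff] at hx
  obtain ⟨y, hy, hxy⟩ := hx ε hε
  obtain ⟨n, hyn⟩ :=
    (Submodule.mem_iSup_of_directed _ (CE.monotone_J_comp hUn hmono).directed_le).mp hy
  exact ⟨n, y, hyn, hxy⟩

end CStarOver

theorem exists_mem_ker_dist_lt {D : Type*} [Zero D] (CI : CStarOver X I) (CB : CStarOver X B)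
    (ι : I →⋆ₙₐ[ℂ] B) (p : B → D)
    (hker : ∀ U : Set X, IsOpen U → ι '' (CI.J U) = ↑(CB.J U) ∩ {b : B | p b = 0})
    {Un : ℕ → Set X} (hUn : ∀ n, IsOpen (Un n)) (hmono : Monotone Un)
    {w : B} (hw : w ∈ CB.J (⋃ n, Un n)) (hpw : p w = 0) {ε : ℝ} (hε : 0 < ε) :
    ∃ k, ∃ w' ∈ CB.J (Un k), p w' = 0 ∧ dist w w' < ε := by
  obtain ⟨y, hy, rfl⟩ : w ∈ ι '' CI.J (⋃ n, Un n) := by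
    rw [hker _ (isOpen_iUnion hUn)]; exact ⟨hw, hpw⟩
  obtain ⟨k, z, hz, hyz⟩ := CI.exists_mem_dist_lt hUn hmono hy hε
  obtain ⟨hzB, hpz⟩ : ι z ∈ ↑(CB.J (Un k)) ∩ {b | p b = 0} := by
    rw [← hker _ (hUn k)]; exact ⟨z, hz, rfl⟩
  exact ⟨k, ι z, hzB, hpz, (ι.dist_apply_le_of_cstarRing y z).trans_lt hyz⟩

section Pullback

variable (CA : CStarOver X A) (CB : CStarOver X B) (φ : A →⋆ₙₐ[ℂ] C) (p : B →⋆ₙₐ[ℂ] C)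

theorem isClosed_pullbackIdeal {U : Set X} (hU : IsOpen U) :
    IsClosed (pullbackIdeal CA CB φ p U) :=
  (isClosed_eq (φ.continuous_of_cstarRing.comp continuous_fst)
    (p.continuous_of_cstarRing.comp continuous_snd)).inter
    (((CA.isClosed U hU).preimage continuous_fst).inter
      ((CB.isClosed U hU).preimage continuous_snd))

theorem closure_iUnion_pullbackIdeal_subset {Un : ℕ → Set X} (hUn : ∀ n, IsOpen (Un n)) :
    closure (⋃ n, pullbackIdeal CA CB φ p (Un n)) ⊆ pullbackIdeal CA CB φ p (⋃ n, Un n) :=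
  closure_minimal
    (Set.iUnion_subset fun n _ ⟨h, ha, hb⟩ ↦
      ⟨h, CA.J_le_J_iUnion hUn n ha, CB.J_le_J_iUnion hUn n hb⟩)
    (isClosed_pullbackIdeal CA CB φ p (isOpen_iUnion hUn))

theorem exists_preimage_norm_le_of_image_eq (CC : CStarOver X C) {U : Set X} (hU : IsOpen U)
    (hsurj : p '' (CB.J U) = ↑(CC.J U)) :
    ∃ K > 0, ∀ c ∈ CC.J U, ∃ b ∈ CB.J U, p b = c ∧ ‖b‖ ≤ K * ‖c‖ :=
  (⟨(p : B →ₗ[ℂ] C), p.continuous_of_cstarRing⟩ : B →L[ℂ] C).exists_preimage_mem_norm_le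
    (CB.isClosed U hU) (CC.isClosed U hU) hsurj

theorem exists_mem_pullbackIdeal_dist_lt (CC : CStarOver X C) (CI : CStarOver X I)
    (ι : I →⋆ₙₐ[ℂ] B) (hsurj : ∀ U : Set X, IsOpen U → p '' (CB.J U) = ↑(CC.J U))
    (hker : ∀ U : Set X, IsOpen U → ι '' (CI.J U) = ↑(CB.J U) ∩ {b : B | p b = 0})
    (hφ : ∀ U : Set X, IsOpen U → φ '' (CA.J U) ⊆ ↑(CC.J U))
    {Un : ℕ → Set X} (hUn : ∀ n, IsOpen (Un n)) (hmono : Monotone Un)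
    {x : A × B} (hx : x ∈ pullbackIdeal CA CB φ p (⋃ n, Un n)) {ε : ℝ} (hε : 0 < ε) :
    ∃ m, ∃ y ∈ pullbackIdeal CA CB φ p (Un m), dist x y < ε := by
  obtain ⟨a, b⟩ := x
  obtain ⟨hab, ha, hb⟩ : φ a = p b ∧ a ∈ CA.J _ ∧ b ∈ CB.J _ := hx
  have hU : IsOpen (⋃ n, Un n) := isOpen_iUnion hUn
  obtain ⟨K, hK, hlift⟩ := exists_preimage_norm_le_of_image_eq CB p CC hU (hsurj _ hU)
  set δ := ε / (K + 1) with hδ_def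
  have hδ : 0 < δ := by positivity
  obtain ⟨n, a', ha', haa'⟩ := CA.exists_mem_dist_lt hUn hmono ha hδ
  obtain ⟨b₁, hb₁, hpb₁⟩ : φ a' ∈ p '' (CB.J (Un n)) := by
    rw [hsurj _ (hUn n)]; exact hφ _ (hUn n) ⟨a', ha', rfl⟩
  have hdefect : p b - φ a' = φ (a - a') := by rw [map_sub, hab]
  have hdefect_mem : p b - φ a' ∈ CC.J (⋃ n, Un n) :=
    hdefect ▸ hφ _ hU ⟨a - a', sub_mem ha (CA.J_le_J_iUnion hUn n ha'), rfl⟩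
  obtain ⟨b₂, hb₂, hpb₂ : p b₂ = p b - φ a', hb₂_norm⟩ := hlift _ hdefect_mem
  obtain ⟨k, w', hw', hpw', hww'⟩ := exists_mem_ker_dist_lt CI CB ι p hker hUn hmono
    (w := b - b₁ - b₂) (sub_mem (sub_mem hb (CB.J_le_J_iUnion hUn n hb₁)) hb₂)
    (by simp only [map_sub, hpb₁, hpb₂]; abel) hδ
  refine ⟨max n k, (a', b₁ + w'), ⟨by simp [hpb₁, hpw'], ?_, ?_⟩, ?_⟩
  · exact CA.monotone_J_comp hUn hmono (le_max_left n k) ha'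
  · exact add_mem (CB.monotone_J_comp hUn hmono (le_max_left n k) hb₁)
      (CB.monotone_J_comp hUn hmono (le_max_right n k) hw')
  have hb₂_small : ‖b₂‖ ≤ K * δ := by
    refine hb₂_norm.trans (mul_le_mul_of_nonneg_left ?_ hK.le)
    rw [hdefect]
    exact (φ.norm_apply_le_of_cstarRing _).trans (dist_eq_norm a a' ▸ haa'.le)
  have hδε : δ * (K + 1) = ε := by rw [hδ_def]; field_simp
  have hbb : dist b (b₁ + w') < ε := calc
    dist b (b₁ + w') = ‖(b - b₁ - b₂ - w') + b₂‖ := by rw [dist_eq_norm]; abel_nf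
    _ ≤ dist (b - b₁ - b₂) w' + ‖b₂‖ := by rw [dist_eq_norm]; exact norm_add_le _ _
    _ < ε := by nlinarith
  rw [Prod.dist_eq]
  exact max_lt (by nlinarith) hbb

end Pullback

theorem stmt_11_general (CI : CStarOver X I) (CB : CStarOver X B) (CC : CStarOver X C)
    (CA : CStarOver X A)
    (ι : I →⋆ₙₐ[ℂ] B) (p : B →⋆ₙₐ[ℂ] C) (φ : A →⋆ₙₐ[ℂ] C)
    (hextX : ∀ U : Set X, IsOpen U →
      p '' (CB.J U) = ↑(CC.J U) ∧ ι '' (CI.J U) = ↑(CB.J U) ∩ {b : B | p b = 0})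
    (hφ : ∀ U : Set X, IsOpen U → φ '' (CA.J U) ⊆ ↑(CC.J U)) :
    ∀ Un : ℕ → Set X, (∀ n, IsOpen (Un n)) → Monotone Un →
      pullbackIdeal CA CB φ p (⋃ n, Un n) =
        closure (⋃ n, pullbackIdeal CA CB φ p (Un n)) := by
  intro Un hUn hmono
  refine subset_antisymm (fun x hx ↦ Metric.mem_closure_iff.mpr fun ε hε ↦ ?_)
    (closure_iUnion_pullbackIdeal_subset CA CB φ p hUn)
  obtain ⟨m, y, hy, hxy⟩ := exists_mem_pullbackIdeal_dist_lt CA CB φ p CC CI ι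
    (fun U hU ↦ (hextX U hU).1) (fun U hU ↦ (hextX U hU).2) hφ hUn hmono hx hε
  exact ⟨y, Set.mem_iUnion_of_mem m hy, hxy⟩

/-- For the pullback `E = {(a,b) ∈ A ⊕ B : φ(a) = p(b)}` of an extension
`I ↣ B ↠ C` of C*-algebras over `X` along an `X`-equivariant `*`-homomorphism
`φ : A → C`, with `E(V) = E ∩ (A(V) ⊕ B(V))`: if `(U n)` is an increasing sequence
of open subsets of `X` with union `U`, then `E(U)` equals the closure of
`⋃ n, E(U n)`. -/
theorem stmt_11 (CI : CStarOver X I) (CB : CStarOver X B) (CC : CStarOver X C)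
    (CA : CStarOver X A)
    (ι : I →⋆ₙₐ[ℂ] B) (p : B →⋆ₙₐ[ℂ] C) (φ : A →⋆ₙₐ[ℂ] C)
    (hι : Function.Injective ι) (hp : Function.Surjective p)
    (hexact : ∀ b : B, p b = 0 ↔ b ∈ Set.range ι)
    (hextX : ∀ U : Set X, IsOpen U →
      p '' (CB.J U) = ↑(CC.J U) ∧ ι '' (CI.J U) = ↑(CB.J U) ∩ {b : B | p b = 0})
    (hφ : ∀ U : Set X, IsOpen U → φ '' (CA.J U) ⊆ ↑(CC.J U)) :
    ∀ Un : ℕ → Set X, (∀ n, IsOpen (Un n)) → Monotone Un →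
      pullbackIdeal CA CB φ p (⋃ n, Un n) =
        closure (⋃ n, pullbackIdeal CA CB φ p (Un n)) :=
  stmt_11_general CI CB CC CA ι p φ hextX hφ
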